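/- arXiv:1704.05277 — 2 statements merged into one kernel-verified Lean document; each statement's English description precedes it below -/
import Mathlib

section
/- An m×n real matrix A is very singular if and only if τ̂(A) > 0. Moreover, for every m×n real matrix A, the quantities τ = τ̂(A) and ω = ω̂(A) are related by the formula τ = (1/n)·(ω − n/m)/(ω + 1). -/
open Filter MeasureTheory Metric Set

noncomputable section

/-- The image of the integer vector `v` under the map `g_t u_A`, where `g_t` is the
diagonal matrix with first `m` entries `e^{t/m}` and last `n` entries `e^{-t/n}`, and
`u_A` is the block-unipotent matrix with upper-right block `A`. -/
def latVec (m n : ℕ) (A : Fin m → Fin n → ℝ) (t : ℝ) (v : Fin (m + n) → ℤ) :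
    Fin (m + n) → ℝ :=
  Fin.append
    (fun i : Fin m =>
      Real.exp (t / m) *
        ((v (Fin.castAdd n i) : ℝ) + ∑ j : Fin n, A i j * (v (Fin.natAdd m j) : ℝ)))
    (fun j : Fin n => Real.exp (-t / n) * (v (Fin.natAdd m j) : ℝ))

/-- The `j`-th successive minimum (`j = 1, …, d`) of the lattice `g_t u_A ℤ^d`: the
infimum of all `λ > 0` such that the lattice contains `j` linearly independent
vectors of norm at most `λ`. -/
def succMin (m n : ℕ) (A : Fin m → Fin n → ℝ) (t : ℝ) (j : ℕ) : ℝ :=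
  sInf {lam : ℝ | 0 < lam ∧ ∃ v : Fin j → Fin (m + n) → ℤ,
    LinearIndependent ℝ (fun i => latVec m n A t (v i)) ∧
    ∀ i, ‖latVec m n A t (v i)‖ ≤ lam}

/-- The vector `A q + p ∈ ℝ^m`, for `p ∈ ℤ^m`, `q ∈ ℤ^n`. -/
def errVec (m n : ℕ) (A : Fin m → Fin n → ℝ) (p : Fin m → ℤ) (q : Fin n → ℤ) :
    Fin m → ℝ :=
  fun i => (∑ j : Fin n, A i j * (q j : ℝ)) + (p i : ℝ)

/-- The integer vector `q ∈ ℤ^n`, viewed as a point of `ℝ^n`. -/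
def intVec (n : ℕ) (q : Fin n → ℤ) : Fin n → ℝ := fun j => (q j : ℝ)

/-- The uniform exponent of irrationality `ω̂(A)` of `A`, as an extended real number:
the supremum of all `ω` such that for all sufficiently large `Q` there exist integer
vectors `p ∈ ℤ^m`, `q ∈ ℤ^n` with `‖Aq + p‖ ≤ Q^{-ω}` and `0 < ‖q‖ ≤ Q`. -/
def omegaHat (m n : ℕ) (A : Fin m → Fin n → ℝ) : EReal :=
  sSup {x : EReal | ∃ ω : ℝ, x = (ω : EReal) ∧
    ∃ Q₀ : ℝ, ∀ Q : ℝ, Q₀ ≤ Q →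
      ∃ (p : Fin m → ℤ) (q : Fin n → ℤ),
        ‖errVec m n A p q‖ ≤ Q ^ (-ω) ∧
        0 < ‖intVec n q‖ ∧ ‖intVec n q‖ ≤ Q}

/-- `A` is very singular: `ω̂(A) > n/m`. -/
def VerySingular (m n : ℕ) (A : Fin m → Fin n → ℝ) : Prop :=
  (((n : ℝ) / m : ℝ) : EReal) < omegaHat m n A

/-- The uniform dynamical exponent `τ̂(A) = liminf_{t → ∞} (-1/t) log λ₁(g_t u_A ℤ^d)`. -/
def tauHat (m n : ℕ) (A : Fin m → Fin n → ℝ) : ℝ :=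
  liminf (fun t : ℝ => -Real.log (succMin m n A t 1) / t) atTop

/-! ### Auxiliary development -/

/-- The approximation property with exponent `ω`. -/
def Approx (m n : ℕ) (A : Fin m → Fin n → ℝ) (ω : ℝ) : Prop :=
  ∃ Q₀ : ℝ, ∀ Q : ℝ, Q₀ ≤ Q →
    ∃ (p : Fin m → ℤ) (q : Fin n → ℤ),
      ‖errVec m n A p q‖ ≤ Q ^ (-ω) ∧ 0 < ‖intVec n q‖ ∧ ‖intVec n q‖ ≤ Q

lemma omegaHat_eq (m n : ℕ) (A : Fin m → Fin n → ℝ) :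
    omegaHat m n A = sSup {x : EReal | ∃ ω : ℝ, x = (ω : EReal) ∧ Approx m n A ω} := rfl

variable {m n : ℕ} {A : Fin m → Fin n → ℝ}

lemma latVec_left (t : ℝ) (v : Fin (m + n) → ℤ) (i : Fin m) :
    latVec m n A t v (Fin.castAdd n i)
      = Real.exp (t / m) *
        ((v (Fin.castAdd n i) : ℝ) + ∑ j : Fin n, A i j * (v (Fin.natAdd m j) : ℝ)) := by
  unfold latVec; rw [Fin.append_left]

lemma latVec_right (t : ℝ) (v : Fin (m + n) → ℤ) (j : Fin n) :
    latVec m n A t v (Fin.natAdd m j) = Real.exp (-t / n) * (v (Fin.natAdd m j) : ℝ) := by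
  unfold latVec; rw [Fin.append_right]

lemma latVec_ne_zero (t : ℝ) {v : Fin (m + n) → ℤ} (hv : v ≠ 0) :
    latVec m n A t v ≠ 0 := by
  by_cases hq : ∀ j, v (Fin.natAdd m j) = 0
  · have hi : ∃ i, v (Fin.castAdd n i) ≠ 0 := by
      by_contra h
      push_neg at h
      exact hv (funext fun k => Fin.addCases (fun i => h i) (fun j => hq j) k)
    obtain ⟨i, hi⟩ := hi
    intro h0
    have := congrFun h0 (Fin.castAdd n i)
    rw [latVec_left] at this
    simp only [Pi.zero_apply, mul_eq_zero] at this
    rcases this with h | h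
    · exact (Real.exp_ne_zero _) h
    · have hs : (∑ j : Fin n, A i j * (v (Fin.natAdd m j) : ℝ)) = 0 := by
        apply Finset.sum_eq_zero; intro j _; rw [hq j]; simp
      rw [hs, add_zero] at h
      exact hi (by exact_mod_cast h)
  · push_neg at hq
    obtain ⟨j, hj⟩ := hq
    intro h0
    have := congrFun h0 (Fin.natAdd m j)
    rw [latVec_right] at this
    simp only [Pi.zero_apply, mul_eq_zero] at this
    rcases this with h | h
    · exact (Real.exp_ne_zero _) h
    · exact hj (by exact_mod_cast h)

lemma succMin_le_norm (t : ℝ) {v : Fin (m + n) → ℤ} (hv : v ≠ 0) :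
    succMin m n A t 1 ≤ ‖latVec m n A t v‖ := by
  apply csInf_le ⟨0, fun lam h => h.1.le⟩
  exact ⟨norm_pos_iff.2 (latVec_ne_zero t hv), fun _ => v,
    linearIndependent_unique_iff.2 (latVec_ne_zero t hv), fun _ => le_rfl⟩

lemma succMin_set_nonempty (hn : 0 < n) (t : ℝ) :
    {lam : ℝ | 0 < lam ∧ ∃ v : Fin 1 → Fin (m + n) → ℤ,
      LinearIndependent ℝ (fun i => latVec m n A t (v i)) ∧
      ∀ i, ‖latVec m n A t (v i)‖ ≤ lam}.Nonempty := by
  have hv : (fun _ : Fin (m + n) => (1 : ℤ)) ≠ 0 := by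
    intro h
    have := congrFun h (Fin.natAdd m ⟨0, hn⟩)
    simp at this
  exact ⟨‖latVec m n A t fun _ => 1‖,
    norm_pos_iff.2 (latVec_ne_zero t hv), fun _ => fun _ => 1,
    linearIndependent_unique_iff.2 (latVec_ne_zero t hv), fun _ => le_rfl⟩

lemma exp_le_norm_latVec (hn : 0 < n) (t : ℝ) (ht : 0 ≤ t) {w : Fin (m + n) → ℤ}
    (hw : latVec m n A t w ≠ 0) :
    Real.exp (-t / n) ≤ ‖latVec m n A t w‖ := by
  have hexpn : Real.exp (-t / n) ≤ 1 := by
    apply Real.exp_le_one_iff.2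
    apply div_nonpos_of_nonpos_of_nonneg (by linarith) (by positivity)
  have hexpm : (1 : ℝ) ≤ Real.exp (t / m) := by
    rw [show (1:ℝ) = Real.exp 0 by simp]
    exact Real.exp_le_exp.2 (by positivity)
  by_cases hq : ∃ j, w (Fin.natAdd m j) ≠ 0
  · obtain ⟨j, hj⟩ := hq
    refine le_trans ?_ (norm_le_pi_norm (latVec m n A t w) (Fin.natAdd m j))
    rw [latVec_right, Real.norm_eq_abs, abs_mul, abs_of_pos (Real.exp_pos _)]
    have h1 : (1:ℝ) ≤ |(w (Fin.natAdd m j) : ℝ)| := by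
      rw [← Int.cast_abs]
      exact_mod_cast Int.one_le_abs hj
    nlinarith [Real.exp_pos (-t / (n:ℝ))]
  · push_neg at hq
    have hi : ∃ i, w (Fin.castAdd n i) ≠ 0 := by
      by_contra h
      push_neg at h
      have hw0 : w = 0 := funext fun k => Fin.addCases (fun i => h i) (fun j => hq j) k
      apply hw
      funext k
      refine Fin.addCases (fun i => ?_) (fun j => ?_) k
      · rw [latVec_left, hw0]; simp
      · rw [latVec_right, hw0]; simp
    obtain ⟨i, hi⟩ := hi
    refine le_trans ?_ (norm_le_pi_norm (latVec m n A t w) (Fin.castAdd n i))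
    rw [latVec_left, Real.norm_eq_abs]
    have hs : (∑ j : Fin n, A i j * (w (Fin.natAdd m j) : ℝ)) = 0 := by
      apply Finset.sum_eq_zero; intro j _; rw [hq j]; simp
    rw [hs, add_zero, abs_mul, abs_of_pos (Real.exp_pos _)]
    have h1 : (1:ℝ) ≤ |(w (Fin.castAdd n i) : ℝ)| := by
      rw [← Int.cast_abs]
      exact_mod_cast Int.one_le_abs hi
    nlinarith [Real.exp_pos (t / (m:ℝ))]

lemma exp_le_succMin (hn : 0 < n) (t : ℝ) (ht : 0 ≤ t) :
    Real.exp (-t / n) ≤ succMin m n A t 1 := by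
  apply le_csInf (succMin_set_nonempty hn t)
  rintro lam ⟨hpos, v, hli, hle⟩
  have h0 : latVec m n A t (v 0) ≠ 0 := hli.ne_zero 0
  exact le_trans (exp_le_norm_latVec hn t ht h0) (hle 0)

lemma succMin_pos (hn : 0 < n) (t : ℝ) (ht : 0 ≤ t) : 0 < succMin m n A t 1 :=
  lt_of_lt_of_le (Real.exp_pos _) (exp_le_succMin hn t ht)

lemma approx_mono {ω₁ ω₂ : ℝ} (h : ω₁ ≤ ω₂) (h2 : Approx m n A ω₂) : Approx m n A ω₁ := by
  obtain ⟨Q₀, hQ₀⟩ := h2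
  refine ⟨max Q₀ 1, fun Q hQ => ?_⟩
  obtain ⟨p, q, h1, hq1, hq2⟩ := hQ₀ Q (le_trans (le_max_left _ _) hQ)
  exact ⟨p, q, h1.trans (Real.rpow_le_rpow_of_exponent_le
    (le_trans (le_max_right _ _) hQ) (neg_le_neg h)), hq1, hq2⟩

lemma approx_le_omegaHat {ω : ℝ} (h : Approx m n A ω) : (ω : EReal) ≤ omegaHat m n A := by
  rw [omegaHat_eq]
  exact le_sSup ⟨ω, rfl, h⟩

lemma approx_of_lt_omegaHat {ω : ℝ} (h : (ω : EReal) < omegaHat m n A) : Approx m n A ω := by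
  rw [omegaHat_eq] at h
  obtain ⟨x, ⟨ω'', rfl, happ⟩, hlt⟩ := lt_sSup_iff.1 h
  exact approx_mono (le_of_lt (by exact_mod_cast hlt)) happ

/-- The matching constant `c` for exponent `ω`. -/
def cExp (m n : ℕ) (ω : ℝ) : ℝ := m * n * (ω + 1) / (m + n)

/-- The dynamical exponent corresponding to `ω`. -/
def dexp (m n : ℕ) (ω : ℝ) : ℝ := (1 / n : ℝ) * ((ω - (n : ℝ) / m) / (ω + 1))

lemma cExp_pos (hm : 0 < m) (hn : 0 < n) {ω : ℝ} (hω : -1 < ω) : 0 < cExp m n ω := by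
  have hm' : (0:ℝ) < m := by exact_mod_cast hm
  have hn' : (0:ℝ) < n := by exact_mod_cast hn
  have : 0 < ω + 1 := by linarith
  unfold cExp; positivity

lemma dexp_eq (hm : 0 < m) (hn : 0 < n) {ω : ℝ} (hω : -1 < ω) :
    dexp m n ω = 1 / n - 1 / cExp m n ω := by
  have hm' : (0:ℝ) < m := by exact_mod_cast hm
  have hn' : (0:ℝ) < n := by exact_mod_cast hn
  have h1 : (0:ℝ) < ω + 1 := by linarith
  unfold dexp cExp
  field_simp
  ring

lemma eventually_dexp_le (hm : 0 < m) (hn : 0 < n) {ω : ℝ} (hω : -1 < ω)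
    (h : Approx m n A ω) :
    ∀ᶠ t in atTop, dexp m n ω ≤ -Real.log (succMin m n A t 1) / t := by
  obtain ⟨Q₀, hQ₀⟩ := h
  have hm' : (0:ℝ) < m := by exact_mod_cast hm
  have hn' : (0:ℝ) < n := by exact_mod_cast hn
  have hω1 : (0:ℝ) < ω + 1 := by linarith
  set c := cExp m n ω with hc
  have hcpos : 0 < c := cExp_pos hm hn hω
  set M := max Q₀ 1 with hM
  have hM1 : (1:ℝ) ≤ M := le_max_right _ _
  filter_upwards [eventually_ge_atTop (max 1 (c * Real.log M))] with t ht
  have ht1 : (1:ℝ) ≤ t := le_trans (le_max_left _ _) ht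
  have ht0 : (0:ℝ) < t := by linarith
  have htc : c * Real.log M ≤ t := le_trans (le_max_right _ _) ht
  set Q := Real.exp (t / c) with hQdef
  have hQM : M ≤ Q := by
    rw [show M = Real.exp (Real.log M) from (Real.exp_log (by linarith)).symm]
    exact Real.exp_le_exp.2 ((le_div_iff₀' hcpos).2 htc)
  have hQ1 : (1:ℝ) ≤ Q := le_trans hM1 hQM
  obtain ⟨p, q, h1, h2, h3⟩ := hQ₀ Q (le_trans (le_max_left _ _) hQM)
  set lam := Real.exp (-t / n) * Q with hlam
  have hlampos : 0 < lam := by positivity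
  -- key exponent matching
  have hkey : Real.exp (t / m) * Q ^ (-ω) = lam := by
    rw [hlam, hQdef, Real.rpow_def_of_pos (Real.exp_pos _), Real.log_exp, ← Real.exp_add,
      ← Real.exp_add]
    congr 1
    have hceq : c * (m + n) = m * n * (ω + 1) := by
      rw [hc]; unfold cExp; field_simp
    field_simp
    linear_combination hceq
  -- the integer vector
  set v : Fin (m + n) → ℤ := Fin.append p q with hv
  have hq0 : ∃ j, q j ≠ 0 := by
    have : intVec n q ≠ 0 := fun h => by simp [h] at h2
    obtain ⟨j, hj⟩ := Function.ne_iff.1 this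
    exact ⟨j, fun h => hj (by simp [intVec, h])⟩
  have hv0 : v ≠ 0 := by
    obtain ⟨j, hj⟩ := hq0
    intro h
    have := congrFun h (Fin.natAdd m j)
    rw [hv, Fin.append_right] at this
    exact hj this
  have hnorm : ‖latVec m n A t v‖ ≤ lam := by
    rw [pi_norm_le_iff_of_nonneg hlampos.le]
    intro k
    refine Fin.addCases (fun i => ?_) (fun j => ?_) k
    · rw [latVec_left, Real.norm_eq_abs, abs_mul, abs_of_pos (Real.exp_pos _)]
      have hvp : (v (Fin.castAdd n i) : ℝ) = (p i : ℝ) := by rw [hv, Fin.append_left]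
      have hvq : ∀ j, (v (Fin.natAdd m j) : ℝ) = (q j : ℝ) := fun j => by
        rw [hv, Fin.append_right]
      have herr : |(v (Fin.castAdd n i) : ℝ) + ∑ j : Fin n, A i j * (v (Fin.natAdd m j) : ℝ)|
          = |errVec m n A p q i| := by
        rw [hvp]
        rw [show (∑ j : Fin n, A i j * (v (Fin.natAdd m j) : ℝ))
            = ∑ j : Fin n, A i j * (q j : ℝ) from Finset.sum_congr rfl fun j _ => by rw [hvq]]
        unfold errVec
        rw [add_comm]
      rw [herr]
      calc Real.exp (t / m) * |errVec m n A p q i|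
          ≤ Real.exp (t / m) * Q ^ (-ω) := by
            have := (norm_le_pi_norm (errVec m n A p q) i).trans h1
            rw [Real.norm_eq_abs] at this
            exact mul_le_mul_of_nonneg_left this (Real.exp_pos _).le
        _ = lam := hkey
    · rw [latVec_right, Real.norm_eq_abs, abs_mul, abs_of_pos (Real.exp_pos _)]
      have hvq : (v (Fin.natAdd m j) : ℝ) = (q j : ℝ) := by rw [hv, Fin.append_right]
      rw [hvq, hlam]
      have := (norm_le_pi_norm (intVec n q) j).trans h3
      rw [Real.norm_eq_abs] at this
      exact mul_le_mul_of_nonneg_left this (Real.exp_pos _).le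
  have hmin_le : succMin m n A t 1 ≤ lam := (succMin_le_norm t hv0).trans hnorm
  have hminpos : 0 < succMin m n A t 1 := succMin_pos hn t ht0.le
  have hloglam : Real.log lam = -t / n + t / c := by
    rw [hlam, hQdef, ← Real.exp_add, Real.log_exp]
  have hlog : Real.log (succMin m n A t 1) ≤ -t / n + t / c := by
    rw [← hloglam]
    exact Real.log_le_log hminpos hmin_le
  have : dexp m n ω = -(-t / n + t / c) / t := by
    rw [dexp_eq hm hn hω, ← hc]
    field_simp
    ring
  rw [this]
  gcongr

lemma approx_of_eventually_lt (hm : 0 < m) (hn : 0 < n) {τ : ℝ} (hτ0 : 0 ≤ τ)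
    (hτn : τ < 1 / n)
    (h : ∀ᶠ t in atTop, τ < -Real.log (succMin m n A t 1) / t) :
    Approx m n A ((1 / m + τ) / (1 / n - τ)) := by
  have hm' : (0:ℝ) < m := by exact_mod_cast hm
  have hn' : (0:ℝ) < n := by exact_mod_cast hn
  set ω := ((1 / m + τ) / (1 / (n:ℝ) - τ)) with hω
  set κ := 1 / (n:ℝ) - τ with hκdef
  have hκ : 0 < κ := by rw [hκdef]; linarith
  obtain ⟨T₀, hT₀⟩ := eventually_atTop.1 h
  set T := max T₀ 1 with hT
  refine ⟨Real.exp (κ * T), fun Q hQ => ?_⟩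
  have hQpos : 0 < Q := lt_of_lt_of_le (Real.exp_pos _) hQ
  set t := Real.log Q / κ with htdef
  have hlogQ : κ * T ≤ Real.log Q := (Real.le_log_iff_exp_le hQpos).2 hQ
  have htT : T ≤ t := by
    rw [htdef, le_div_iff₀ hκ]
    linarith [hlogQ]
  have ht1 : (1:ℝ) ≤ t := le_trans (le_max_right _ _) htT
  have ht0 : (0:ℝ) < t := by linarith
  have hκt : κ * t = Real.log Q := by
    rw [htdef]
    field_simp
  have hft := hT₀ t (le_trans (le_max_left _ _) htT)
  have hminpos : 0 < succMin m n A t 1 := succMin_pos hn t ht0.le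
  have hsuper : succMin m n A t 1 < Real.exp (-(τ * t)) := by
    rw [← Real.log_lt_iff_lt_exp hminpos]
    have := (lt_div_iff₀ ht0).1 hft
    linarith
  obtain ⟨lam, hlamm, hlamlt⟩ :=
    exists_lt_of_csInf_lt (succMin_set_nonempty hn t) hsuper
  obtain ⟨hlpos, v, hli, hbound⟩ := hlamm
  set w := v 0 with hwdef
  have hw : latVec m n A t w ≠ 0 := hli.ne_zero 0
  have hwb : ‖latVec m n A t w‖ < Real.exp (-(τ * t)) := lt_of_le_of_lt (hbound 0) hlamlt
  have hcoord : ∀ k, |latVec m n A t w k| < Real.exp (-(τ * t)) := fun k => by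
    refine lt_of_le_of_lt ?_ hwb
    have := norm_le_pi_norm (latVec m n A t w) k
    rwa [Real.norm_eq_abs] at this
  set p : Fin m → ℤ := fun i => w (Fin.castAdd n i) with hp
  set q : Fin n → ℤ := fun j => w (Fin.natAdd m j) with hq
  have hexple : Real.exp (-(τ * t)) ≤ 1 := by
    rw [Real.exp_le_one_iff]
    nlinarith
  -- q ≠ 0
  have hq0 : ∃ j, q j ≠ 0 := by
    by_contra h'
    push_neg at h'
    have hi : ∃ i, w (Fin.castAdd n i) ≠ 0 := by
      by_contra h''
      push_neg at h''
      have hw0 : w = 0 := funext fun k =>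
        Fin.addCases (fun i => h'' i) (fun j => h' j) k
      apply hw
      funext k
      refine Fin.addCases (fun i => ?_) (fun j => ?_) k
      · rw [latVec_left, hw0]; simp
      · rw [latVec_right, hw0]; simp
    obtain ⟨i, hi⟩ := hi
    have hc := hcoord (Fin.castAdd n i)
    rw [latVec_left] at hc
    have hs : (∑ j : Fin n, A i j * (w (Fin.natAdd m j) : ℝ)) = 0 := by
      apply Finset.sum_eq_zero; intro j _
      have : q j = 0 := h' j
      rw [hq] at this
      simp only at this
      rw [this]; simp
    rw [hs, add_zero, abs_mul, abs_of_pos (Real.exp_pos _)] at hc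
    have h1 : (1:ℝ) ≤ |(w (Fin.castAdd n i) : ℝ)| := by
      rw [← Int.cast_abs]
      exact_mod_cast Int.one_le_abs hi
    have hexpm : (1 : ℝ) ≤ Real.exp (t / m) := by
      rw [show (1:ℝ) = Real.exp 0 by simp]
      exact Real.exp_le_exp.2 (by positivity)
    nlinarith
  refine ⟨p, q, ?_, ?_, ?_⟩
  · -- error bound
    have hQω : Q ^ (-ω) = Real.exp (-((1 / m + τ) * t)) := by
      rw [Real.rpow_def_of_pos hQpos, ← hκt]
      congr 1
      rw [hω]
      field_simp
    rw [hQω, pi_norm_le_iff_of_nonneg (Real.exp_pos _).le]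
    intro i
    have hc := hcoord (Fin.castAdd n i)
    rw [latVec_left] at hc
    have herr : errVec m n A p q i
        = (w (Fin.castAdd n i) : ℝ) + ∑ j : Fin n, A i j * (w (Fin.natAdd m j) : ℝ) := by
      unfold errVec
      rw [hp, hq, add_comm]
    rw [Real.norm_eq_abs, herr]
    have hsplit : Real.exp (-((1/(m:ℝ) + τ) * t)) = Real.exp (-(t/m)) * Real.exp (-(τ*t)) := by
      rw [← Real.exp_add]; congr 1; ring
    rw [hsplit]
    rw [abs_mul, abs_of_pos (Real.exp_pos _)] at hc
    have := mul_le_mul_of_nonneg_left (le_of_lt hc) (Real.exp_pos (-(t/(m:ℝ)))).le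
    calc |(w (Fin.castAdd n i) : ℝ) + ∑ j : Fin n, A i j * (w (Fin.natAdd m j) : ℝ)|
        = Real.exp (-(t/m)) * (Real.exp (t/m) * |(w (Fin.castAdd n i) : ℝ) + ∑ j : Fin n, A i j * (w (Fin.natAdd m j) : ℝ)|) := by
          rw [← mul_assoc, ← Real.exp_add]
          simp
      _ ≤ Real.exp (-(t/m)) * Real.exp (-(τ*t)) := this
  · -- q nonzero norm
    obtain ⟨j, hj⟩ := hq0
    have : intVec n q ≠ 0 := by
      intro h'
      apply hj
      have h2 : (q j : ℝ) = 0 := congrFun h' j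
      exact_mod_cast h2
    exact norm_pos_iff.2 this
  · -- norm q ≤ Q
    rw [pi_norm_le_iff_of_nonneg hQpos.le]
    intro j
    have hc := hcoord (Fin.natAdd m j)
    rw [latVec_right, abs_mul, abs_of_pos (Real.exp_pos _)] at hc
    have hQexp : Q = Real.exp (t/n) * Real.exp (-(τ*t)) := by
      rw [← Real.exp_add, show t/(n:ℝ) + -(τ*t) = κ * t by rw [hκdef]; ring, hκt]
      exact (Real.exp_log hQpos).symm
    rw [Real.norm_eq_abs, hQexp]
    have : (intVec n q j : ℝ) = (w (Fin.natAdd m j) : ℝ) := by rw [intVec, hq]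
    rw [this]
    have hmul := mul_le_mul_of_nonneg_left (le_of_lt hc) (Real.exp_pos (t/(n:ℝ))).le
    calc |(w (Fin.natAdd m j) : ℝ)|
        = Real.exp (t/n) * (Real.exp (-t/n) * |(w (Fin.natAdd m j) : ℝ)|) := by
          rw [← mul_assoc, ← Real.exp_add]
          rw [show t/(n:ℝ) + -t/n = 0 by ring, Real.exp_zero, one_mul]
      _ ≤ Real.exp (t/n) * Real.exp (-(τ*t)) := hmul

lemma approx_of_mul_lt (hm : 0 < m) (hn : 0 < n) {ω : ℝ} (hω0 : 0 ≤ ω)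
    (hωlt : ω * m < n) : Approx m n A ω := by
  have hm' : (0:ℝ) < m := by exact_mod_cast hm
  have hn' : (0:ℝ) < n := by exact_mod_cast hn
  have hωm : ω * (m:ℝ) < n := by exact_mod_cast hωlt
  set e := (n:ℝ) - ω * m with he
  have hepos : 0 < e := by rw [he]; linarith
  refine ⟨max ((2:ℝ) ^ ((m:ℝ)/e)) 1, fun Q hQ => ?_⟩
  have hQ1 : (1:ℝ) ≤ Q := le_trans (le_max_right _ _) hQ
  have hQpos : (0:ℝ) < Q := by linarith
  have hQ2 : (2:ℝ) ^ ((m:ℝ)/e) ≤ Q := le_trans (le_max_left _ _) hQ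
  have hQω1 : (1:ℝ) ≤ Q ^ ω := Real.one_le_rpow hQ1 hω0
  have hQωpos : (0:ℝ) < Q ^ ω := by linarith
  set N := ⌈Q ^ ω⌉₊ with hN
  have hN1 : 1 ≤ N := by
    rw [hN, Nat.one_le_ceil_iff]
    linarith
  have hNpos' : (0:ℝ) < N := by exact_mod_cast hN1
  set k := ⌊Q⌋₊ with hk
  have hNle : (N:ℝ) ≤ 2 * Q ^ ω := by
    have := Nat.ceil_lt_add_one (le_of_lt hQωpos)
    rw [← hN] at this
    linarith
  have h2m : (2:ℝ) ^ (m:ℕ) ≤ Q ^ e := by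
    calc (2:ℝ) ^ (m:ℕ) = ((2:ℝ) ^ ((m:ℝ)/e)) ^ e := by
          rw [← Real.rpow_natCast 2 m, ← Real.rpow_mul (by norm_num), div_mul_cancel₀]
          exact hepos.ne'
      _ ≤ Q ^ e := Real.rpow_le_rpow (Real.rpow_nonneg (by norm_num) _) hQ2 hepos.le
  have hcard : N ^ m < (k + 1) ^ n := by
    have hc1 : ((N:ℝ)) ^ (m:ℕ) ≤ (2 * Q ^ ω) ^ (m:ℕ) :=
      pow_le_pow_left₀ (by positivity) hNle m
    have hc2 : ((2:ℝ) * Q ^ ω) ^ (m:ℕ) = 2 ^ (m:ℕ) * Q ^ (ω * m) := by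
      rw [mul_pow, ← Real.rpow_natCast (Q ^ ω) m, ← Real.rpow_mul hQpos.le]
    have hc3 : (2:ℝ) ^ (m:ℕ) * Q ^ (ω * m) ≤ Q ^ e * Q ^ (ω * m) :=
      mul_le_mul_of_nonneg_right h2m (Real.rpow_nonneg hQpos.le _)
    have hc4 : Q ^ e * Q ^ (ω * m) = Q ^ ((n:ℕ) : ℝ) := by
      rw [← Real.rpow_add hQpos]; congr 1; rw [he]; ring
    have hc5 : Q ^ (((n:ℕ)) : ℝ) < ((k:ℝ) + 1) ^ (n:ℕ) := by
      rw [Real.rpow_natCast]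
      exact pow_lt_pow_left₀ (Nat.lt_floor_add_one Q) hQpos.le hn.ne'
    have hfin : ((N:ℝ)) ^ (m:ℕ) < ((k:ℝ) + 1) ^ (n:ℕ) := by
      calc ((N:ℝ)) ^ (m:ℕ) ≤ (2 * Q ^ ω) ^ (m:ℕ) := hc1
        _ = 2 ^ (m:ℕ) * Q ^ (ω * m) := hc2
        _ ≤ Q ^ e * Q ^ (ω * m) := hc3
        _ = Q ^ ((n:ℕ) : ℝ) := hc4
        _ < ((k:ℝ) + 1) ^ (n:ℕ) := hc5
    exact_mod_cast hfin
  have hcard' : Fintype.card (Fin m → Fin N) < Fintype.card (Fin n → Fin (k + 1)) := by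
    simp only [Fintype.card_fun, Fintype.card_fin]
    exact hcard
  have hfract_lt : ∀ r : ℝ, (N:ℝ) * Int.fract r < N :=
    fun r => mul_lt_of_lt_one_right hNpos' (Int.fract_lt_one r)
  have hfract_nonneg : ∀ r : ℝ, (0:ℝ) ≤ (N:ℝ) * Int.fract r :=
    fun r => mul_nonneg hNpos'.le (Int.fract_nonneg r)
  set Φ : (Fin n → Fin (k + 1)) → (Fin m → Fin N) := fun x i =>
    ⟨⌊(N:ℝ) * Int.fract (∑ j, A i j * ((x j : ℕ) : ℝ))⌋₊,
      (Nat.floor_lt (hfract_nonneg _)).2 (hfract_lt _)⟩ with hΦdef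
  obtain ⟨x, y, hxy, hΦ⟩ := Fintype.exists_ne_map_eq_of_card_lt Φ hcard'
  set Sx : Fin m → ℝ := fun i => ∑ j, A i j * ((x j : ℕ) : ℝ) with hSx
  set Sy : Fin m → ℝ := fun i => ∑ j, A i j * ((y j : ℕ) : ℝ) with hSy
  set q : Fin n → ℤ := fun j => ((x j : ℕ) : ℤ) - ((y j : ℕ) : ℤ) with hqdef
  set p : Fin m → ℤ := fun i => ⌊Sy i⌋ - ⌊Sx i⌋ with hpdef
  have hfloor_eq : ∀ i, ⌊(N:ℝ) * Int.fract (Sx i)⌋₊ = ⌊(N:ℝ) * Int.fract (Sy i)⌋₊ := by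
    intro i
    have := congrFun hΦ i
    rw [hΦdef] at this
    exact congrArg Fin.val this
  have hclose : ∀ i, |Int.fract (Sx i) - Int.fract (Sy i)| ≤ Q ^ (-ω) := by
    intro i
    set a := Int.fract (Sx i)
    set b := Int.fract (Sy i)
    have heq := hfloor_eq i
    have ha1 : ((⌊(N:ℝ) * a⌋₊ : ℝ)) ≤ (N:ℝ) * a := Nat.floor_le (hfract_nonneg _)
    have ha2 : (N:ℝ) * a < (⌊(N:ℝ) * a⌋₊ : ℝ) + 1 := Nat.lt_floor_add_one _
    have hb1 : ((⌊(N:ℝ) * b⌋₊ : ℝ)) ≤ (N:ℝ) * b := Nat.floor_le (hfract_nonneg _)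
    have hb2 : (N:ℝ) * b < (⌊(N:ℝ) * b⌋₊ : ℝ) + 1 := Nat.lt_floor_add_one _
    have hcast : ((⌊(N:ℝ) * a⌋₊ : ℝ)) = ((⌊(N:ℝ) * b⌋₊ : ℝ)) := by exact_mod_cast heq
    have h1 : |(N:ℝ) * a - (N:ℝ) * b| < 1 := by
      rw [abs_lt]
      constructor <;> linarith
    have h2 : (N:ℝ) * |a - b| < 1 := by
      have habs : (N:ℝ) * |a - b| = |(N:ℝ) * a - (N:ℝ) * b| := by
        rw [← mul_sub, abs_mul, abs_of_pos hNpos']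
      rw [habs]; exact h1
    have h3 : |a - b| < 1 / N := (lt_div_iff₀' hNpos').2 h2
    have h4 : 1 / (N:ℝ) ≤ (Q ^ ω)⁻¹ := by
      rw [one_div]
      exact inv_anti₀ hQωpos (Nat.le_ceil _)
    rw [Real.rpow_neg hQpos.le]
    exact le_trans h3.le h4
  have hxyj : ∃ j, x j ≠ y j := Function.ne_iff.1 hxy
  refine ⟨p, q, ?_, ?_, ?_⟩
  · -- error bound
    rw [pi_norm_le_iff_of_nonneg (by positivity)]
    intro i
    have hsum : (∑ j, A i j * (((x j : ℕ):ℝ) - ((y j : ℕ):ℝ))) = Sx i - Sy i := by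
      rw [hSx, hSy, ← Finset.sum_sub_distrib]
      exact Finset.sum_congr rfl fun j _ => by ring
    have herr : errVec m n A p q i = Int.fract (Sx i) - Int.fract (Sy i) := by
      have hq' : ∀ j, ((q j : ℤ):ℝ) = ((x j : ℕ):ℝ) - ((y j : ℕ):ℝ) := fun j => by
        rw [hqdef]; push_cast; ring
      have hsum2 : (∑ j, A i j * ((q j : ℤ):ℝ)) = Sx i - Sy i := by
        rw [← hsum]; exact Finset.sum_congr rfl fun j _ => by rw [hq']
      unfold errVec
      rw [hsum2, hpdef, ← Int.self_sub_floor, ← Int.self_sub_floor]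
      push_cast
      ring
    rw [Real.norm_eq_abs, herr]
    exact hclose i
  · -- q nonzero
    obtain ⟨j, hj⟩ := hxyj
    have hqj : q j ≠ 0 := by
      rw [hqdef]
      simp only [ne_eq, sub_eq_zero]
      intro h
      exact hj (Fin.ext (by exact_mod_cast h))
    apply norm_pos_iff.2
    intro h'
    apply hqj
    have h2 : ((q j : ℤ) : ℝ) = 0 := congrFun h' j
    exact_mod_cast h2
  · -- norm bound
    rw [pi_norm_le_iff_of_nonneg hQpos.le]
    intro j
    have hxk : ((x j : ℕ) : ℝ) ≤ k := by exact_mod_cast Fin.is_le (x j)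
    have hyk : ((y j : ℕ) : ℝ) ≤ k := by exact_mod_cast Fin.is_le (y j)
    have hx0 : (0:ℝ) ≤ ((x j : ℕ) : ℝ) := by positivity
    have hy0 : (0:ℝ) ≤ ((y j : ℕ) : ℝ) := by positivity
    have hkQ : ((k:ℕ) : ℝ) ≤ Q := Nat.floor_le hQpos.le
    rw [Real.norm_eq_abs]
    have : (intVec n q j : ℝ) = ((x j : ℕ) : ℝ) - ((y j : ℕ) : ℝ) := by
      rw [intVec, hqdef]
      push_cast
      ring
    rw [this, abs_le]
    constructor <;> linarith

lemma eventually_le_one_div (hn : 0 < n) :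
    ∀ᶠ t in atTop, -Real.log (succMin m n A t 1) / t ≤ 1 / n := by
  have hn' : (0:ℝ) < n := by exact_mod_cast hn
  filter_upwards [eventually_ge_atTop (1:ℝ)] with t ht1
  have ht0 : (0:ℝ) < t := by linarith
  have h1 : -t / n ≤ Real.log (succMin m n A t 1) :=
    (Real.le_log_iff_exp_le (succMin_pos hn t ht0.le)).2 (exp_le_succMin hn t ht0.le)
  rw [div_le_iff₀ ht0]
  have h2 : (1/(n:ℝ)) * t = t / n := by ring
  have h3 : -t/(n:ℝ) = -(t/n) := by ring
  linarith

lemma isBoundedUnder_le_F (hn : 0 < n) :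
    IsBoundedUnder (· ≤ ·) atTop (fun t => -Real.log (succMin m n A t 1) / t) :=
  ⟨1 / n, eventually_map.2 (eventually_le_one_div hn)⟩

lemma isBoundedUnder_ge_F (hm : 0 < m) (hn : 0 < n) :
    IsBoundedUnder (· ≥ ·) atTop (fun t => -Real.log (succMin m n A t 1) / t) := by
  have hn' : (0:ℝ) < n := by exact_mod_cast hn
  exact ⟨dexp m n 0, eventually_map.2 (eventually_dexp_le hm hn (by norm_num)
    (approx_of_mul_lt hm hn le_rfl (by simpa using hn')))⟩

lemma dexp_le_tauHat (hm : 0 < m) (hn : 0 < n) {ω : ℝ} (hω : -1 < ω)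
    (h : Approx m n A ω) : dexp m n ω ≤ tauHat m n A := by
  unfold tauHat
  exact Filter.le_liminf_of_le ((isBoundedUnder_le_F hn).isCoboundedUnder_ge)
    (eventually_dexp_le hm hn hω h)

lemma dexp_lt_one_div (hm : 0 < m) (hn : 0 < n) {ω : ℝ} (hω1 : -1 < ω) :
    dexp m n ω < 1 / n := by
  have hm' : (0:ℝ) < m := by exact_mod_cast hm
  have hn' : (0:ℝ) < n := by exact_mod_cast hn
  have hω1' : (0:ℝ) < ω + 1 := by linarith
  unfold dexp
  have hr : (ω - (n:ℝ)/m) / (ω+1) < 1 := by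
    rw [div_lt_one hω1']
    have : (0:ℝ) ≤ (n:ℝ)/m := by positivity
    linarith
  calc (1/(n:ℝ)) * ((ω - (n:ℝ)/m)/(ω+1)) < (1/n) * 1 :=
        mul_lt_mul_of_pos_left hr (by positivity)
    _ = 1/n := mul_one _

lemma dexp_nonneg (hm : 0 < m) (hn : 0 < n) {ω : ℝ} (h : (n:ℝ)/m ≤ ω) :
    0 ≤ dexp m n ω := by
  have hm' : (0:ℝ) < m := by exact_mod_cast hm
  have hn' : (0:ℝ) < n := by exact_mod_cast hn
  have h0 : (0:ℝ) ≤ (n:ℝ)/m := by positivity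
  have hω1 : (0:ℝ) < ω + 1 := by linarith
  unfold dexp
  apply mul_nonneg (by positivity)
  apply div_nonneg (by linarith) hω1.le

lemma dexp_pos (hm : 0 < m) (hn : 0 < n) {ω : ℝ} (h : (n:ℝ)/m < ω) :
    0 < dexp m n ω := by
  have hm' : (0:ℝ) < m := by exact_mod_cast hm
  have hn' : (0:ℝ) < n := by exact_mod_cast hn
  have h0 : (0:ℝ) ≤ (n:ℝ)/m := by positivity
  have hω1 : (0:ℝ) < ω + 1 := by linarith
  unfold dexp
  apply mul_pos (by positivity)
  apply div_pos (by linarith) hω1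

lemma lt_cross (hm : 0 < m) (hn : 0 < n) {ω τ' : ℝ} (hω1 : -1 < ω) (hτn : τ' < 1/n)
    (h : dexp m n ω < τ') : ω < (1/m + τ') / (1/n - τ') := by
  have hm' : (0:ℝ) < m := by exact_mod_cast hm
  have hn' : (0:ℝ) < n := by exact_mod_cast hn
  have hκ : (0:ℝ) < 1/(n:ℝ) - τ' := by linarith
  have hω1' : (0:ℝ) < ω + 1 := by linarith
  rw [lt_div_iff₀ hκ]
  unfold dexp at h
  have h1 : (ω - (n:ℝ)/m)/(ω+1) < n * τ' := by
    have h0 := mul_lt_mul_of_pos_left h hn'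
    have heq : (n:ℝ) * ((1/n) * ((ω - (n:ℝ)/m)/(ω+1))) = (ω - (n:ℝ)/m)/(ω+1) := by
      field_simp
    linarith
  have h2 : ω - (n:ℝ)/m < n * τ' * (ω+1) := (div_lt_iff₀ hω1').1 h1
  have key : (n:ℝ) * (ω * (1/n - τ') - (1/m + τ')) = (ω - (n:ℝ)/m) - n*τ'*(ω+1) := by
    field_simp
    ring
  nlinarith [key, h2, hn']

lemma nm_lt_cross (hm : 0 < m) (hn : 0 < n) {τ' : ℝ} (hτ0 : 0 < τ') (hτn : τ' < 1/n) :
    (n:ℝ)/m < (1/m + τ') / (1/n - τ') := by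
  have hm' : (0:ℝ) < m := by exact_mod_cast hm
  have hn' : (0:ℝ) < n := by exact_mod_cast hn
  have hκ : (0:ℝ) < 1/(n:ℝ) - τ' := by linarith
  rw [lt_div_iff₀ hκ]
  have key : ((n:ℝ)/m) * (1/n - τ') = 1/m - ((n:ℝ)/m)*τ' := by field_simp
  have hpos : (0:ℝ) < ((n:ℝ)/m) * τ' := by positivity
  linarith

/-- Theorem 1.3: `A` is very singular iff `τ̂(A) > 0`; moreover the quantities
`τ = τ̂(A)` and `ω = ω̂(A)` are related by `τ = (1/n) (ω - n/m) / (ω + 1)`. -/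
theorem verySingular_iff_tauHat_pos (m n : ℕ) (hm : 0 < m) (hn : 0 < n)
    (A : Fin m → Fin n → ℝ) :
    (VerySingular m n A ↔ 0 < tauHat m n A) ∧
    ∀ ω : ℝ, omegaHat m n A = (ω : EReal) →
      tauHat m n A = (1 / n : ℝ) * ((ω - (n : ℝ) / m) / (ω + 1)) := by
  have hm' : (0:ℝ) < m := by exact_mod_cast hm
  have hn' : (0:ℝ) < n := by exact_mod_cast hn
  constructor
  · constructor
    · -- very singular → 0 < tauHat
      intro hvs
      unfold VerySingular at hvs
      rw [omegaHat_eq] at hvs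
      obtain ⟨x, ⟨ω'', rfl, happ⟩, hlt⟩ := lt_sSup_iff.1 hvs
      have hgt : (n:ℝ)/m < ω'' := by exact_mod_cast hlt
      have h0 : (0:ℝ) ≤ (n:ℝ)/m := by positivity
      have hτ := dexp_le_tauHat hm hn (by linarith) happ
      exact lt_of_lt_of_le (dexp_pos hm hn hgt) hτ
    · -- 0 < tauHat → very singular
      intro ht
      have h1n : (0:ℝ) < 1/n := by positivity
      obtain ⟨τ', h1, h2⟩ := exists_between (lt_min ht h1n)
      have hτt : τ' < tauHat m n A := lt_of_lt_of_le h2 (min_le_left _ _)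
      have hτn : τ' < 1/(n:ℝ) := lt_of_lt_of_le h2 (min_le_right _ _)
      unfold tauHat at hτt
      have hev := eventually_lt_of_lt_liminf hτt (isBoundedUnder_ge_F hm hn)
      have happ := approx_of_eventually_lt hm hn h1.le hτn hev
      have hle := approx_le_omegaHat happ
      unfold VerySingular
      refine lt_of_lt_of_le ?_ hle
      exact_mod_cast nm_lt_cross hm hn h1 hτn
  · -- formula
    intro ω h
    have h0ω : (0:ℝ) ≤ ω := by
      have := approx_le_omegaHat (A := A) (approx_of_mul_lt hm hn le_rfl
        (show (0:ℝ)*m < n by simpa using hn'))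
      rw [h] at this
      exact_mod_cast this
    have hnm : (n:ℝ)/m ≤ ω := by
      by_contra hc
      push_neg at hc
      obtain ⟨ω', h1, h2⟩ := exists_between hc
      have hω'0 : (0:ℝ) ≤ ω' := le_trans h0ω h1.le
      have hω'm : ω' * m < n := by
        have := (lt_div_iff₀ hm').1 h2
        linarith
      have := approx_le_omegaHat (A := A) (approx_of_mul_lt hm hn hω'0 hω'm)
      rw [h] at this
      have : ω' ≤ ω := by exact_mod_cast this
      linarith
    have hω1 : (-1:ℝ) < ω := by
      have : (0:ℝ) ≤ (n:ℝ)/m := by positivity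
      linarith
    -- lower bound
    have hlow : dexp m n ω ≤ tauHat m n A := by
      have hcont : ContinuousAt (dexp m n) ω := by
        have hne : ω + 1 ≠ 0 := by linarith
        unfold dexp
        apply ContinuousAt.mul continuousAt_const
        exact ContinuousAt.div (continuousAt_id.sub continuousAt_const)
          (continuousAt_id.add continuousAt_const) hne
      have hmem : Ioo (-1:ℝ) ω ∈ nhdsWithin ω (Iio ω) :=
        Ioo_mem_nhdsLT_of_mem ⟨hω1, le_rfl⟩
      have hev : ∀ᶠ x in nhdsWithin ω (Iio ω), dexp m n x ≤ tauHat m n A := by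
        filter_upwards [hmem] with x hx
        apply dexp_le_tauHat hm hn hx.1
        apply approx_of_lt_omegaHat
        rw [h]
        exact_mod_cast hx.2
      exact le_of_tendsto (hcont.tendsto.mono_left nhdsWithin_le_nhds) hev
    -- upper bound
    have hup : tauHat m n A ≤ dexp m n ω := by
      by_contra hc
      push_neg at hc
      obtain ⟨τ', hτ1, hτ2⟩ :=
        exists_between (lt_min hc (dexp_lt_one_div hm hn hω1))
      have hτ'0 : (0:ℝ) ≤ τ' := le_trans (dexp_nonneg hm hn hnm) hτ1.le
      have hτ'n : τ' < 1/(n:ℝ) := lt_of_lt_of_le hτ2 (min_le_right _ _)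
      have hτt : τ' < tauHat m n A := lt_of_lt_of_le hτ2 (min_le_left _ _)
      unfold tauHat at hτt
      have hev := eventually_lt_of_lt_liminf hτt (isBoundedUnder_ge_F hm hn)
      have happ := approx_of_eventually_lt hm hn hτ'0 hτ'n hev
      have hle : ((1/(m:ℝ) + τ')/(1/(n:ℝ) - τ') : ℝ) ≤ ω := by
        have := approx_le_omegaHat happ
        rw [h] at this
        exact_mod_cast this
      exact absurd hle (not_le.2 (lt_cross hm hn hω1 hτ'n hτ1))
    exact le_antisymm hup hlow

end
end

section
/- For all positive integers m, n and all integers 1 ≤ k ≤ m + n − 1, the function f_{m,n}(k) = mn − (k·mn/(m+n))·(1 − k/(m+n)) − {km/(m+n)}·{kn/(m+n)} (where {x} denotes the fractional part of x) satisfies: f_{m,n}(m+n−k) = f_{m,n}(k); f_{m,n}(1) = f_{m,n}(m+n−1) = δ_{m,n}; and f_{m,n}(k) ≤ δ_{m,n}. -/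
open Filter MeasureTheory Metric Set

noncomputable section

/-- The function `f_{m,n}(k)` of Theorem 1.10, where `Int.fract` is the fractional
part. -/
def fFun (m n k : ℕ) : ℝ :=
  (m * n : ℝ) - ((k : ℝ) * m * n / (m + n)) * (1 - (k : ℝ) / (m + n)) -
    Int.fract ((k : ℝ) * m / (m + n)) * Int.fract ((k : ℝ) * n / (m + n))

lemma fFun_symm (m n k : ℕ) (hm : 0 < m) (hn : 0 < n)
    (hk1 : 1 ≤ k) (hk2 : k ≤ m + n - 1) :
    fFun m n (m + n - k) = fFun m n k := by
  have hs : (0:ℝ) < (m:ℝ) + n := by positivity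
  have hs0 : ((m:ℝ) + n) ≠ 0 := ne_of_gt hs
  have hks : k ≤ m + n := le_trans hk2 (Nat.sub_le _ _)
  have hcast : ((m + n - k : ℕ) : ℝ) = (m:ℝ) + n - k := by
    push_cast [Nat.cast_sub hks]; ring
  have hm' : (((m:ℝ) + n - k) * m / ((m:ℝ) + n)) = (m:ℝ) + (-(((k:ℝ) * m) / ((m:ℝ)+n))) := by
    field_simp; ring
  have hn' : (((m:ℝ) + n - k) * n / ((m:ℝ) + n)) = (n:ℝ) + (-(((k:ℝ) * n) / ((m:ℝ)+n))) := by
    field_simp; ring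
  have hkn : ((k:ℝ) * n / ((m:ℝ)+n)) = (k:ℝ) + (-(((k:ℝ) * m) / ((m:ℝ)+n))) := by
    field_simp; ring
  have fm : Int.fract (((m:ℝ) + n - k) * m / ((m:ℝ) + n))
      = Int.fract (-(((k:ℝ) * m) / ((m:ℝ)+n))) := by
    rw [hm']; exact Int.fract_natCast_add m _
  have fn : Int.fract (((m:ℝ) + n - k) * n / ((m:ℝ) + n))
      = Int.fract (-(((k:ℝ) * n) / ((m:ℝ)+n))) := by
    rw [hn']; exact Int.fract_natCast_add n _
  have fkn : Int.fract ((k:ℝ) * n / ((m:ℝ)+n))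
      = Int.fract (-(((k:ℝ) * m) / ((m:ℝ)+n))) := by
    rw [hkn]; exact Int.fract_natCast_add k _
  unfold fFun
  rw [hcast, fm, fn, fkn]
  set a := Int.fract ((k:ℝ) * m / ((m:ℝ)+n)) with ha
  by_cases h0 : a = 0
  · have hna : Int.fract (-(((k:ℝ) * m) / ((m:ℝ)+n))) = 0 := Int.fract_neg_eq_zero.mpr h0
    have hnb : Int.fract (-(((k:ℝ) * n) / ((m:ℝ)+n))) = 0 := by
      rw [Int.fract_neg_eq_zero, hkn, Int.fract_natCast_add, hna]
    rw [hna, hnb, h0]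
    field_simp
    ring
  · have hna : Int.fract (-(((k:ℝ) * m) / ((m:ℝ)+n))) = 1 - a := Int.fract_neg h0
    have hb0 : Int.fract (-(((k:ℝ) * m) / ((m:ℝ)+n))) ≠ 0 := by
      rw [hna]
      have := Int.fract_lt_one ((k:ℝ) * m / ((m:ℝ)+n))
      rw [← ha] at this
      linarith
    have hnb : Int.fract (-(((k:ℝ) * n) / ((m:ℝ)+n))) = a := by
      rw [show -(((k:ℝ) * n) / ((m:ℝ)+n)) = -((k:ℝ) + (-(((k:ℝ) * m) / ((m:ℝ)+n)))) by
        rw [← hkn]]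
      have : -((k:ℝ) + (-(((k:ℝ) * m) / ((m:ℝ)+n)))) = ((k:ℝ) * m / ((m:ℝ)+n)) - ((k:ℤ):ℝ) := by
        push_cast; ring
      rw [this, Int.fract_sub_intCast, ← ha]
    rw [hna, hnb]
    field_simp
    ring

lemma fFun_one (m n : ℕ) (hm : 0 < m) (hn : 0 < n) :
    fFun m n 1 = (m * n : ℝ) * (1 - 1 / (m + n)) := by
  have hs : (0:ℝ) < (m:ℝ) + n := by positivity
  have h1 : (0:ℝ) < (n:ℝ) := by exact_mod_cast hn
  have h2 : (0:ℝ) < (m:ℝ) := by exact_mod_cast hm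
  have fm : Int.fract ((1:ℝ) * m / ((m:ℝ)+n)) = (m:ℝ) / ((m:ℝ)+n) := by
    rw [one_mul]
    exact Int.fract_eq_self.mpr ⟨by positivity, by rw [div_lt_one hs]; linarith⟩
  have fn : Int.fract ((1:ℝ) * n / ((m:ℝ)+n)) = (n:ℝ) / ((m:ℝ)+n) := by
    rw [one_mul]
    exact Int.fract_eq_self.mpr ⟨by positivity, by rw [div_lt_one hs]; linarith⟩
  unfold fFun
  push_cast
  rw [fm, fn]
  field_simp
  ring

/-- Properties of the function `f_{m,n}`: it satisfies the symmetry
`f_{m,n}(m + n - k) = f_{m,n}(k)`, takes the value `δ_{m,n} = mn(1 - 1/(m+n))` at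
`k = 1` and `k = m + n - 1`, and is bounded above by `δ_{m,n}` for
`1 ≤ k ≤ m + n - 1`. -/
theorem fFun_properties (m n k : ℕ) (hm : 0 < m) (hn : 0 < n)
    (hk1 : 1 ≤ k) (hk2 : k ≤ m + n - 1) :
    fFun m n (m + n - k) = fFun m n k ∧
    fFun m n 1 = (m * n : ℝ) * (1 - 1 / (m + n)) ∧
    fFun m n (m + n - 1) = (m * n : ℝ) * (1 - 1 / (m + n)) ∧
    fFun m n k ≤ (m * n : ℝ) * (1 - 1 / (m + n)) := by
  have h1 := fFun_one m n hm hn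
  have hlast : fFun m n (m + n - 1) = (m * n : ℝ) * (1 - 1 / (m + n)) := by
    rw [fFun_symm m n 1 hm hn le_rfl (by omega), h1]
  refine ⟨fFun_symm m n k hm hn hk1 hk2, h1, hlast, ?_⟩
  -- the inequality
  rcases show k = 1 ∨ k = m + n - 1 ∨ (2 ≤ k ∧ k ≤ m + n - 2) by omega with h | h | h
  · rw [h, h1]
  · rw [h, hlast]
  · -- middle case
    have hs : (0:ℝ) < (m:ℝ) + n := by positivity
    have hkey : m + n ≤ k * (m + n - k) := by
      obtain ⟨j, hj⟩ : ∃ j, m + n - k = j ∧ 2 ≤ j ∧ m + n = k + j := ⟨m + n - k, rfl, by omega, by omega⟩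
      obtain ⟨hj1, hj2, hj3⟩ := hj
      rw [hj1, hj3]
      nlinarith [h.1]
    have hkeyR : (m:ℝ) + n ≤ (k:ℝ) * ((m:ℝ) + n - k) := by
      have hks : k ≤ m + n := by omega
      calc (m:ℝ) + n ≤ ((k * (m + n - k) : ℕ) : ℝ) := by exact_mod_cast Nat.cast_le.mpr hkey
        _ = (k:ℝ) * ((m:ℝ) + n - k) := by push_cast [Nat.cast_sub hks]; ring
    have habs : (0:ℝ) ≤ Int.fract ((k:ℝ) * m / ((m:ℝ)+n)) * Int.fract ((k:ℝ) * n / ((m:ℝ)+n)) :=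
      mul_nonneg (Int.fract_nonneg _) (Int.fract_nonneg _)
    have hX : (m:ℝ) * n / ((m:ℝ)+n) ≤ ((k:ℝ) * m * n / ((m:ℝ) + n)) * (1 - (k:ℝ) / ((m:ℝ) + n)) := by
      have hrw : ((k:ℝ) * m * n / ((m:ℝ) + n)) * (1 - (k:ℝ) / ((m:ℝ) + n))
          = ((k:ℝ) * ((m:ℝ) + n - k) * (m * n)) / (((m:ℝ)+n) * ((m:ℝ)+n)) := by
        field_simp
      rw [hrw, div_le_div_iff₀ hs (by positivity)]
      have hmn : (0:ℝ) ≤ (m:ℝ) * n := by positivity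
      nlinarith [mul_le_mul_of_nonneg_right hkeyR (show (0:ℝ) ≤ (m:ℝ)*n*((m:ℝ)+n) by positivity)]
    unfold fFun
    have : (m * n : ℝ) * (1 - 1 / ((m:ℝ) + n)) = (m:ℝ)*n - (m:ℝ)*n/((m:ℝ)+n) := by
      field_simp
    push_cast
    push_cast at this ⊢
    rw [this]
    linarith

end
end
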